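/- The Breitenberger uncertainty constant $UC$ is continuous with respect to the norm $\|f\|_{W^2_1}=\|f\|+\|f'\|$: if $f\in L_2(0,1)$ has $\sum_k k^2|c_k(f)|^2<\infty$ and $\tau(f)\ne 0$, then for every $\varepsilon>0$ there exists $\delta>0$ such that every $g\in L_2(0,1)$ with $\sum_k k^2|c_k(g)|^2<\infty$, $\tau(g)\ne 0$, and $\|f-g\|+\|f'-g'\|<\delta$ satisfies $|UC(f)-UC(g)|<\varepsilon$. -/

import Mathlib

open Filter MeasureTheory

noncomputable section

/-- The sum `∑ₖ cₖ · conj c_{k+1}` appearing in the first trigonometric moment. -/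
def trigSum (c : ℤ → ℂ) : ℂ := ∑' k : ℤ, c k * (starRingEnd ℂ) (c (k + 1))

/-- The first trigonometric moment `τ(f) = -2π ∑ₖ cₖ · conj c_{k+1}`. -/
def tau (c : ℤ → ℂ) : ℂ := -2 * Real.pi * trigSum c

/-- The angular variance of a 1-periodic function given by its Fourier coefficients. -/
def varA (c : ℤ → ℂ) : ℝ :=
  (1 / (4 * Real.pi ^ 2)) *
    ((∑' k : ℤ, ‖c k‖ ^ 2) ^ 2 / ‖trigSum c‖ ^ 2 - 1)

/-- The frequency variance of a 1-periodic function given by its Fourier coefficients. -/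
def varF (c : ℤ → ℂ) : ℝ :=
  (4 * Real.pi ^ 2 * ∑' k : ℤ, (k : ℝ) ^ 2 * ‖c k‖ ^ 2) / (∑' k : ℤ, ‖c k‖ ^ 2) -
    (4 * Real.pi ^ 2 * (∑' k : ℤ, (k : ℝ) * ‖c k‖ ^ 2) ^ 2) /
      (∑' k : ℤ, ‖c k‖ ^ 2) ^ 2

/-- The Breitenberger (periodic) uncertainty constant. -/
def UC (c : ℤ → ℂ) : ℝ := Real.sqrt (varA c * varF c)


private lemma cs_summable {f g : ℤ → ℝ} (hf0 : ∀ k, 0 ≤ f k) (hg0 : ∀ k, 0 ≤ g k)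
    (hf : Summable fun k => f k ^ 2) (hg : Summable fun k => g k ^ 2) :
    Summable fun k => f k * g k := by
  refine Summable.of_nonneg_of_le (fun k => mul_nonneg (hf0 k) (hg0 k)) (fun k => ?_)
    (((hf.add hg).div_const 2))
  nlinarith [sq_nonneg (f k - g k)]

private lemma cs_tsum {f g : ℤ → ℝ} (hf0 : ∀ k, 0 ≤ f k) (hg0 : ∀ k, 0 ≤ g k)
    (hf : Summable fun k => f k ^ 2) (hg : Summable fun k => g k ^ 2) :
    ∑' k, f k * g k ≤ Real.sqrt (∑' k, f k ^ 2) * Real.sqrt (∑' k, g k ^ 2) := by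
  refine Summable.tsum_le_of_sum_le (cs_summable hf0 hg0 hf hg) fun s => ?_
  have h1 := Finset.sum_mul_sq_le_sq_mul_sq s f g
  have hfs : ∑ k ∈ s, f k ^ 2 ≤ ∑' k, f k ^ 2 := Summable.sum_le_tsum s (fun k _ => sq_nonneg _) hf
  have hgs : ∑ k ∈ s, g k ^ 2 ≤ ∑' k, g k ^ 2 := Summable.sum_le_tsum s (fun k _ => sq_nonneg _) hg
  have h0 : 0 ≤ ∑ k ∈ s, f k * g k := Finset.sum_nonneg fun k _ => mul_nonneg (hf0 k) (hg0 k)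
  calc ∑ k ∈ s, f k * g k = Real.sqrt ((∑ k ∈ s, f k * g k) ^ 2) := (Real.sqrt_sq h0).symm
    _ ≤ Real.sqrt ((∑' k, f k ^ 2) * (∑' k, g k ^ 2)) := Real.sqrt_le_sqrt (h1.trans
        (mul_le_mul hfs hgs (Finset.sum_nonneg fun k _ => sq_nonneg _)
          (tsum_nonneg fun k => sq_nonneg _)))
    _ = _ := Real.sqrt_mul (tsum_nonneg fun k => sq_nonneg _) _

private lemma sqrt_add_le' (x y : ℝ) (hx : 0 ≤ x) (hy : 0 ≤ y) :
    Real.sqrt (x + y) ≤ Real.sqrt x + Real.sqrt y := by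
  have h : x + y ≤ (Real.sqrt x + Real.sqrt y) ^ 2 := by
    nlinarith [Real.sq_sqrt hx, Real.sq_sqrt hy, Real.sqrt_nonneg x, Real.sqrt_nonneg y,
      mul_nonneg (Real.sqrt_nonneg x) (Real.sqrt_nonneg y)]
  calc Real.sqrt (x + y) ≤ Real.sqrt ((Real.sqrt x + Real.sqrt y) ^ 2) := Real.sqrt_le_sqrt h
    _ = _ := Real.sqrt_sq (by positivity)

private lemma weighted_diff {w W : ℤ → ℝ} (hW : ∀ k, |w k| ≤ W k)
    {c d : ℤ → ℂ} (hc : Summable fun k => W k * ‖c k‖ ^ 2)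
    (hd : Summable fun k => W k * ‖d k‖ ^ 2) :
    |(∑' k, w k * ‖c k‖ ^ 2) - ∑' k, w k * ‖d k‖ ^ 2| ≤
      2 * Real.sqrt (∑' k, W k * ‖c k‖ ^ 2) * Real.sqrt (∑' k, W k * ‖c k - d k‖ ^ 2) +
        ∑' k, W k * ‖c k - d k‖ ^ 2 := by
  have hW0 : ∀ k, 0 ≤ W k := fun k => (abs_nonneg _).trans (hW k)
  have habs : ∀ (x : ℤ → ℂ), ∀ k, |w k * ‖x k‖ ^ 2| ≤ W k * ‖x k‖ ^ 2 := by
    intro x k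
    rw [abs_mul, abs_of_nonneg (by positivity : (0:ℝ) ≤ ‖x k‖ ^ 2)]
    exact mul_le_mul_of_nonneg_right (hW k) (by positivity)
  have hwc : Summable fun k => w k * ‖c k‖ ^ 2 :=
    Summable.of_abs (Summable.of_nonneg_of_le (fun k => abs_nonneg _) (habs c) hc)
  have hwd : Summable fun k => w k * ‖d k‖ ^ 2 :=
    Summable.of_abs (Summable.of_nonneg_of_le (fun k => abs_nonneg _) (habs d) hd)
  have he : Summable fun k => W k * ‖c k - d k‖ ^ 2 := by
    refine Summable.of_nonneg_of_le (fun k => mul_nonneg (hW0 k) (by positivity)) (fun k => ?_)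
      (((hc.mul_left 2)).add (hd.mul_left 2))
    have h1 : ‖c k - d k‖ ≤ ‖c k‖ + ‖d k‖ := norm_sub_le _ _
    nlinarith [hW0 k, norm_nonneg (c k - d k), norm_nonneg (c k), norm_nonneg (d k),
      mul_le_mul_of_nonneg_left (mul_self_le_mul_self (norm_nonneg _) h1) (hW0 k),
      mul_nonneg (hW0 k) (sq_nonneg (‖c k‖ - ‖d k‖))]
  -- the sequence of square roots
  set F : ℤ → ℝ := fun k => Real.sqrt (W k) * ‖c k‖ with hF
  set G : ℤ → ℝ := fun k => Real.sqrt (W k) * ‖c k - d k‖ with hG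
  have hF2 : ∀ k, F k ^ 2 = W k * ‖c k‖ ^ 2 := by
    intro k; rw [hF]; simp only; rw [mul_pow, Real.sq_sqrt (hW0 k)]
  have hG2 : ∀ k, G k ^ 2 = W k * ‖c k - d k‖ ^ 2 := by
    intro k; rw [hG]; simp only; rw [mul_pow, Real.sq_sqrt (hW0 k)]
  have hFs : Summable fun k => F k ^ 2 := by simpa only [hF2] using hc
  have hGs : Summable fun k => G k ^ 2 := by simpa only [hG2] using he
  have hFG : Summable fun k => F k * G k :=
    cs_summable (fun k => mul_nonneg (Real.sqrt_nonneg _) (norm_nonneg _))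
      (fun k => mul_nonneg (Real.sqrt_nonneg _) (norm_nonneg _)) hFs hGs
  have key : ∀ k, |w k * ‖c k‖ ^ 2 - w k * ‖d k‖ ^ 2| ≤ 2 * (F k * G k) + W k * ‖c k - d k‖ ^ 2 := by
    intro k
    have hFGk : F k * G k = W k * (‖c k‖ * ‖c k - d k‖) := by
      rw [hF, hG]; simp only
      rw [show Real.sqrt (W k) * ‖c k‖ * (Real.sqrt (W k) * ‖c k - d k‖)
        = Real.sqrt (W k) * Real.sqrt (W k) * (‖c k‖ * ‖c k - d k‖) by ring,
        Real.mul_self_sqrt (hW0 k)]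
    rw [hFGk, ← mul_sub, abs_mul]
    have h1 : |‖c k‖ ^ 2 - ‖d k‖ ^ 2| ≤ 2 * (‖c k‖ * ‖c k - d k‖) + ‖c k - d k‖ ^ 2 := by
      have t0 := abs_norm_sub_norm_le (c k) (d k)
      rw [abs_le] at t0
      have t1 : ‖d k‖ ≤ ‖c k‖ + ‖c k - d k‖ := by linarith [t0.1]
      have t2 : ‖c k‖ ≤ ‖d k‖ + ‖c k - d k‖ := by linarith [t0.2]
      rw [abs_le]
      constructor <;> nlinarith [norm_nonneg (c k), norm_nonneg (d k), norm_nonneg (c k - d k)]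
    calc |w k| * |‖c k‖ ^ 2 - ‖d k‖ ^ 2| ≤ W k * (2 * (‖c k‖ * ‖c k - d k‖) + ‖c k - d k‖ ^ 2) :=
          mul_le_mul (hW k) h1 (abs_nonneg _) (hW0 k)
      _ = 2 * (W k * (‖c k‖ * ‖c k - d k‖)) + W k * ‖c k - d k‖ ^ 2 := by ring
  have hdiff : (∑' k, w k * ‖c k‖ ^ 2) - ∑' k, w k * ‖d k‖ ^ 2
      = ∑' k, (w k * ‖c k‖ ^ 2 - w k * ‖d k‖ ^ 2) := (Summable.tsum_sub hwc hwd).symm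
  rw [hdiff]
  have hbsum : Summable fun k => 2 * (F k * G k) + W k * ‖c k - d k‖ ^ 2 :=
    (hFG.mul_left 2).add he
  have hnorms : Summable fun k => ‖w k * ‖c k‖ ^ 2 - w k * ‖d k‖ ^ 2‖ := by
    refine Summable.of_nonneg_of_le (fun k => norm_nonneg _) (fun k => ?_) hbsum
    simpa [Real.norm_eq_abs] using key k
  have h2 : |∑' k, (w k * ‖c k‖ ^ 2 - w k * ‖d k‖ ^ 2)|
      ≤ ∑' k, (2 * (F k * G k) + W k * ‖c k - d k‖ ^ 2) := by
    rw [← Real.norm_eq_abs]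
    refine (norm_tsum_le_tsum_norm hnorms).trans (Summable.tsum_le_tsum (fun k => ?_) hnorms hbsum)
    simpa [Real.norm_eq_abs] using key k
  refine h2.trans ?_
  rw [Summable.tsum_add (hFG.mul_left 2) he, tsum_mul_left]
  have h3 : ∑' k, F k * G k ≤ Real.sqrt (∑' k, W k * ‖c k‖ ^ 2) *
      Real.sqrt (∑' k, W k * ‖c k - d k‖ ^ 2) := by
    have := cs_tsum (f := F) (g := G)
      (fun k => mul_nonneg (Real.sqrt_nonneg _) (norm_nonneg _))
      (fun k => mul_nonneg (Real.sqrt_nonneg _) (norm_nonneg _)) hFs hGs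
    rwa [tsum_congr hF2, tsum_congr hG2] at this
  nlinarith [h3]

private lemma sub_summable {W : ℤ → ℝ} (hW0 : ∀ k, 0 ≤ W k)
    {c d : ℤ → ℂ} (hc : Summable fun k => W k * ‖c k‖ ^ 2)
    (hd : Summable fun k => W k * ‖d k‖ ^ 2) :
    Summable fun k => W k * ‖c k - d k‖ ^ 2 := by
  refine Summable.of_nonneg_of_le (fun k => mul_nonneg (hW0 k) (by positivity)) (fun k => ?_)
    (((hc.mul_left 2)).add (hd.mul_left 2))
  have h1 : ‖c k - d k‖ ≤ ‖c k‖ + ‖d k‖ := norm_sub_le _ _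
  nlinarith [hW0 k, norm_nonneg (c k - d k), norm_nonneg (c k), norm_nonneg (d k),
    mul_le_mul_of_nonneg_left (mul_self_le_mul_self (norm_nonneg _) h1) (hW0 k),
    mul_nonneg (hW0 k) (sq_nonneg (‖c k‖ - ‖d k‖))]

private lemma sq_summable {c : ℤ → ℂ} (hc : Summable fun k : ℤ => (k : ℝ) ^ 2 * ‖c k‖ ^ 2) :
    Summable fun k => ‖c k‖ ^ 2 := by
  have h0 : Summable (fun k : ℤ => if k = 0 then ‖c 0‖ ^ 2 else 0) :=
    summable_of_ne_finset_zero (s := {0}) (fun k hk => if_neg (by simpa using hk))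
  refine Summable.of_nonneg_of_le (fun k => by positivity) (fun k => ?_) (hc.add h0)
  rcases eq_or_ne k 0 with h | h
  · subst h; simp
  · rw [if_neg h]
    have h1 : (1 : ℝ) ≤ |(k : ℝ)| := by
      rw [← Int.cast_abs]; exact_mod_cast Int.one_le_abs h
    have h2 : (1 : ℝ) ≤ (k : ℝ) ^ 2 := by nlinarith [sq_abs ((k : ℝ))]
    nlinarith [mul_le_mul_of_nonneg_right h2 (by positivity : (0:ℝ) ≤ ‖c k‖ ^ 2)]

set_option maxHeartbeats 1000000 in
private lemma trig_diff {c d : ℤ → ℂ} (hc2 : Summable fun k => ‖c k‖ ^ 2)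
    (hd2 : Summable fun k => ‖d k‖ ^ 2) :
    ‖trigSum c - trigSum d‖ ≤
      Real.sqrt (∑' k : ℤ, ‖c k - d k‖ ^ 2) * Real.sqrt (∑' k : ℤ, ‖c k‖ ^ 2) +
        Real.sqrt (∑' k : ℤ, ‖d k‖ ^ 2) * Real.sqrt (∑' k : ℤ, ‖c k - d k‖ ^ 2) := by
  have he2 : Summable fun k => ‖c k - d k‖ ^ 2 := by
    have := sub_summable (W := fun _ => (1 : ℝ)) (fun _ => zero_le_one)
      (c := c) (d := d) (by simpa using hc2) (by simpa using hd2)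
    simpa using this
  have hshift : ∀ (f : ℤ → ℝ), Summable f → Summable fun k => f (k + 1) := by
    intro f hf
    exact ((Equiv.addRight (1 : ℤ)).summable_iff (f := f)).mpr hf
  have htshift : ∀ (f : ℤ → ℝ), (∑' k, f (k + 1)) = ∑' k, f k := by
    intro f
    exact (Equiv.addRight (1 : ℤ)).tsum_eq f
  have hc2' : Summable fun k => ‖c (k + 1)‖ ^ 2 := hshift _ hc2
  have he2' : Summable fun k => ‖c (k + 1) - d (k + 1)‖ ^ 2 :=
    hshift (fun k => ‖c k - d k‖ ^ 2) he2
  have hP1 : Summable fun k => ‖c k - d k‖ * ‖c (k + 1)‖ :=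
    cs_summable (fun k => norm_nonneg _) (fun k => norm_nonneg _) he2 hc2'
  have hP2 : Summable fun k => ‖d k‖ * ‖c (k + 1) - d (k + 1)‖ :=
    cs_summable (fun k => norm_nonneg _) (fun k => norm_nonneg _) hd2 he2'
  have hPc : Summable fun k => c k * (starRingEnd ℂ) (c (k + 1)) := by
    refine Summable.of_norm ?_
    have : ∀ k : ℤ, ‖c k * (starRingEnd ℂ) (c (k + 1))‖ = ‖c k‖ * ‖c (k + 1)‖ := by
      intro k; simp [norm_mul]
    rw [show (fun k => ‖c k * (starRingEnd ℂ) (c (k + 1))‖) = fun k => ‖c k‖ * ‖c (k + 1)‖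
      from funext this]
    exact cs_summable (fun k => norm_nonneg _) (fun k => norm_nonneg _) hc2 hc2'
  have hPd : Summable fun k => d k * (starRingEnd ℂ) (d (k + 1)) := by
    refine Summable.of_norm ?_
    have : ∀ k : ℤ, ‖d k * (starRingEnd ℂ) (d (k + 1))‖ = ‖d k‖ * ‖d (k + 1)‖ := by
      intro k; simp [norm_mul]
    rw [show (fun k => ‖d k * (starRingEnd ℂ) (d (k + 1))‖) = fun k => ‖d k‖ * ‖d (k + 1)‖
      from funext this]
    exact cs_summable (fun k => norm_nonneg _) (fun k => norm_nonneg _) hd2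
      (hshift (fun k => ‖d k‖ ^ 2) hd2)
  have key : ∀ k : ℤ, ‖c k * (starRingEnd ℂ) (c (k + 1)) - d k * (starRingEnd ℂ) (d (k + 1))‖
      ≤ ‖c k - d k‖ * ‖c (k + 1)‖ + ‖d k‖ * ‖c (k + 1) - d (k + 1)‖ := by
    intro k
    have hsplit : c k * (starRingEnd ℂ) (c (k + 1)) - d k * (starRingEnd ℂ) (d (k + 1))
        = (c k - d k) * (starRingEnd ℂ) (c (k + 1))
          + d k * (starRingEnd ℂ) (c (k + 1) - d (k + 1)) := by
      rw [map_sub]; ring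
    rw [hsplit]
    refine (norm_add_le _ _).trans ?_
    simp [norm_mul, ← map_sub, Complex.norm_conj]
  have hbsum : Summable fun k => ‖c k - d k‖ * ‖c (k + 1)‖ + ‖d k‖ * ‖c (k + 1) - d (k + 1)‖ :=
    hP1.add hP2
  have hnorms : Summable fun k =>
      ‖c k * (starRingEnd ℂ) (c (k + 1)) - d k * (starRingEnd ℂ) (d (k + 1))‖ :=
    Summable.of_nonneg_of_le (fun k => norm_nonneg _) key hbsum
  have h1 : ‖trigSum c - trigSum d‖ ≤
      ∑' k, (‖c k - d k‖ * ‖c (k + 1)‖ + ‖d k‖ * ‖c (k + 1) - d (k + 1)‖) := by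
    rw [trigSum, trigSum, ← Summable.tsum_sub hPc hPd]
    exact (norm_tsum_le_tsum_norm hnorms).trans (Summable.tsum_le_tsum key hnorms hbsum)
  refine h1.trans ?_
  rw [Summable.tsum_add hP1 hP2]
  have hcs1 : ∑' k, ‖c k - d k‖ * ‖c (k + 1)‖ ≤
      Real.sqrt (∑' k, ‖c k - d k‖ ^ 2) * Real.sqrt (∑' k, ‖c k‖ ^ 2) := by
    have := cs_tsum (f := fun k => ‖c k - d k‖) (g := fun k => ‖c (k + 1)‖)
      (fun k => norm_nonneg _) (fun k => norm_nonneg _) he2 hc2'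
    rwa [htshift (fun k => ‖c k‖ ^ 2)] at this
  have hcs2 : ∑' k, ‖d k‖ * ‖c (k + 1) - d (k + 1)‖ ≤
      Real.sqrt (∑' k, ‖d k‖ ^ 2) * Real.sqrt (∑' k, ‖c k - d k‖ ^ 2) := by
    have := cs_tsum (f := fun k => ‖d k‖) (g := fun k => ‖c (k + 1) - d (k + 1)‖)
      (fun k => norm_nonneg _) (fun k => norm_nonneg _) hd2 he2'
    rwa [htshift (fun k => ‖c k - d k‖ ^ 2)] at this
  linarith

private def Gfun : ℝ × ℝ × ℝ × ℂ → ℝ := fun q =>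
  Real.sqrt ((1 / (4 * Real.pi ^ 2) * (q.1 ^ 2 / ‖q.2.2.2‖ ^ 2 - 1)) *
    ((4 * Real.pi ^ 2 * q.2.2.1) / q.1 - 4 * Real.pi ^ 2 * q.2.1 ^ 2 / q.1 ^ 2))

private lemma UC_eq_G (x : ℤ → ℂ) : UC x = Gfun
    (∑' k : ℤ, ‖x k‖ ^ 2, ∑' k : ℤ, (k : ℝ) * ‖x k‖ ^ 2,
      ∑' k : ℤ, (k : ℝ) ^ 2 * ‖x k‖ ^ 2, trigSum x) := rfl

private lemma num1 {A B u δ ε' : ℝ} (hA0 : 0 ≤ A) (hB0 : 0 ≤ B) (hu0 : 0 ≤ u)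
    (huδ : u < δ) (hδpos : 0 < δ) (hδ1 : δ ≤ 1)
    (hδε : δ * (4 * (A + B + 1) + 1) ≤ ε') : 2 * A * u + u ^ 2 < ε' := by
  nlinarith [mul_nonneg hA0 (sub_nonneg.mpr huδ.le), mul_nonneg hu0 (sub_nonneg.mpr huδ.le),
    mul_nonneg hδpos.le (sub_nonneg.mpr hδ1), mul_nonneg hB0 hδpos.le, hδpos]

private lemma num2 {A B u v δ ε' : ℝ} (hA0 : 0 ≤ A) (hB0 : 0 ≤ B) (hu0 : 0 ≤ u) (hv0 : 0 ≤ v)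
    (huδ : u < δ) (hvδ : v < δ) (hδpos : 0 < δ) (hδ1 : δ ≤ 1)
    (hδε : δ * (4 * (A + B + 1) + 1) ≤ ε') :
    2 * (A + B) * (u + v) + (u ^ 2 + v ^ 2) < ε' := by
  nlinarith [mul_nonneg (add_nonneg hA0 hB0) (by linarith : (0:ℝ) ≤ 2 * δ - (u + v)),
    mul_nonneg hu0 (sub_nonneg.mpr huδ.le), mul_nonneg hv0 (sub_nonneg.mpr hvδ.le),
    mul_nonneg hδpos.le (sub_nonneg.mpr hδ1), hδpos]

set_option maxHeartbeats 1000000 in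
theorem UC_continuous (c : ℤ → ℂ)
    (hc : Summable fun k : ℤ => (k : ℝ) ^ 2 * ‖c k‖ ^ 2)
    (hτc : tau c ≠ 0) :
    ∀ ε > 0, ∃ δ > 0, ∀ d : ℤ → ℂ,
      (Summable fun k : ℤ => (k : ℝ) ^ 2 * ‖d k‖ ^ 2) → tau d ≠ 0 →
      Real.sqrt (∑' k : ℤ, ‖c k - d k‖ ^ 2) +
        2 * Real.pi * Real.sqrt (∑' k : ℤ, (k : ℝ) ^ 2 * ‖c k - d k‖ ^ 2) < δ →
      |UC c - UC d| < ε := by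
  intro ε hε
  have hc2 : Summable fun k : ℤ => ‖c k‖ ^ 2 := sq_summable hc
  have hT : trigSum c ≠ 0 := by
    intro h; apply hτc; simp [tau, h]
  have ha0 : 0 < ∑' k : ℤ, ‖c k‖ ^ 2 := by
    obtain ⟨k, hk⟩ : ∃ k, c k ≠ 0 := by
      by_contra hall
      push_neg at hall
      exact hT (by simp [trigSum, hall])
    have h1 : 0 < ‖c k‖ ^ 2 := pow_pos (norm_pos_iff.mpr hk) 2
    exact h1.trans_le (Summable.le_tsum hc2 k fun j _ => by positivity)
  have ha2nn : 0 ≤ ∑' k : ℤ, (k : ℝ) ^ 2 * ‖c k‖ ^ 2 :=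
    tsum_nonneg fun k => mul_nonneg (sq_nonneg _) (sq_nonneg _)
  set p : ℝ × ℝ × ℝ × ℂ := (∑' k : ℤ, ‖c k‖ ^ 2, ∑' k : ℤ, (k : ℝ) * ‖c k‖ ^ 2,
    ∑' k : ℤ, (k : ℝ) ^ 2 * ‖c k‖ ^ 2, trigSum c) with hp
  have hGc : ContinuousAt Gfun p := by
    have hq1 : ContinuousAt (fun q : ℝ × ℝ × ℝ × ℂ => q.1) p := continuousAt_fst
    have hq2 : ContinuousAt (fun q : ℝ × ℝ × ℝ × ℂ => q.2.1) p := continuousAt_snd.fst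
    have hq3 : ContinuousAt (fun q : ℝ × ℝ × ℝ × ℂ => q.2.2.1) p := continuousAt_snd.snd.fst
    have hq4 : ContinuousAt (fun q : ℝ × ℝ × ℝ × ℂ => q.2.2.2) p := continuousAt_snd.snd.snd
    have hTne : ‖trigSum c‖ ^ 2 ≠ 0 := pow_ne_zero 2 (norm_ne_zero_iff.mpr hT)
    have h1 : ContinuousAt (fun q : ℝ × ℝ × ℝ × ℂ =>
        1 / (4 * Real.pi ^ 2) * (q.1 ^ 2 / ‖q.2.2.2‖ ^ 2 - 1)) p :=
      continuousAt_const.mul (((hq1.pow 2).div (hq4.norm.pow 2) hTne).sub continuousAt_const)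
    have h2 : ContinuousAt (fun q : ℝ × ℝ × ℝ × ℂ =>
        (4 * Real.pi ^ 2 * q.2.2.1) / q.1 - 4 * Real.pi ^ 2 * q.2.1 ^ 2 / q.1 ^ 2) p :=
      ((continuousAt_const.mul hq3).div hq1 ha0.ne').sub
        ((continuousAt_const.mul (hq2.pow 2)).div (hq1.pow 2) (pow_ne_zero 2 ha0.ne'))
    unfold Gfun
    exact Real.continuous_sqrt.continuousAt.comp (h1.mul h2)
  obtain ⟨ε', hε', hball⟩ := Metric.continuousAt_iff.mp hGc ε hε
  set A := Real.sqrt (∑' k : ℤ, ‖c k‖ ^ 2) with hA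
  set B := Real.sqrt (∑' k : ℤ, (k : ℝ) ^ 2 * ‖c k‖ ^ 2) with hB
  set M := A + B + 1 with hM
  have hA0 : 0 ≤ A := Real.sqrt_nonneg _
  have hB0 : 0 ≤ B := Real.sqrt_nonneg _
  have hA2 : A ^ 2 = ∑' k : ℤ, ‖c k‖ ^ 2 := by rw [hA]; exact Real.sq_sqrt ha0.le
  have hMpos : (0:ℝ) < 4 * M + 1 := by rw [hM]; linarith
  refine ⟨min 1 (ε' / (4 * M + 1)), lt_min one_pos (div_pos hε' hMpos), ?_⟩
  intro d hd hτd hlt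
  set δ := min 1 (ε' / (4 * M + 1)) with hδ
  have hδpos : 0 < δ := lt_min one_pos (div_pos hε' hMpos)
  have hδ1 : δ ≤ 1 := min_le_left _ _
  have hδε : δ * (4 * M + 1) ≤ ε' := by
    rw [← le_div_iff₀ hMpos]
    exact min_le_right _ _
  have hδε' : δ * (4 * (A + B + 1) + 1) ≤ ε' := by rw [hM] at hδε; exact hδε
  have hd2 : Summable fun k : ℤ => ‖d k‖ ^ 2 := sq_summable hd
  have he2 : Summable fun k : ℤ => ‖c k - d k‖ ^ 2 := by
    have := sub_summable (W := fun _ => (1:ℝ)) (fun _ => zero_le_one) (c := c) (d := d)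
      (by simpa using hc2) (by simpa using hd2)
    simpa using this
  have hek : Summable fun k : ℤ => (k : ℝ) ^ 2 * ‖c k - d k‖ ^ 2 :=
    sub_summable (fun k => sq_nonneg _) hc hd
  set u := Real.sqrt (∑' k : ℤ, ‖c k - d k‖ ^ 2) with hu
  set v := Real.sqrt (∑' k : ℤ, (k : ℝ) ^ 2 * ‖c k - d k‖ ^ 2) with hv
  have hu0 : 0 ≤ u := Real.sqrt_nonneg _
  have hv0 : 0 ≤ v := Real.sqrt_nonneg _
  have husq : u ^ 2 = ∑' k : ℤ, ‖c k - d k‖ ^ 2 := by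
    rw [hu]; exact Real.sq_sqrt (tsum_nonneg fun k => sq_nonneg _)
  have hvsq : v ^ 2 = ∑' k : ℤ, (k : ℝ) ^ 2 * ‖c k - d k‖ ^ 2 := by
    rw [hv]; exact Real.sq_sqrt (tsum_nonneg fun k => mul_nonneg (sq_nonneg _) (sq_nonneg _))
  have hpi : (2:ℝ) ≤ Real.pi := Real.two_le_pi
  have huδ : u < δ := by nlinarith [mul_nonneg (by linarith : (0:ℝ) ≤ 2 * Real.pi) hv0]
  have hvδ : v < δ := by nlinarith [mul_nonneg (by linarith : (0:ℝ) ≤ 2 * Real.pi - 1) hv0]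
  -- estimate for S0
  have E0 : |(∑' k : ℤ, ‖c k‖ ^ 2) - ∑' k : ℤ, ‖d k‖ ^ 2| ≤ 2 * A * u + u ^ 2 := by
    have h := weighted_diff (w := fun _ => (1:ℝ)) (W := fun _ => (1:ℝ))
      (fun k => by norm_num) (c := c) (d := d) (by simpa using hc2) (by simpa using hd2)
    simp only [one_mul] at h
    rw [← hA, ← hu, ← husq] at h
    exact h
  -- estimate for S2
  have E2 : |(∑' k : ℤ, (k : ℝ) ^ 2 * ‖c k‖ ^ 2) - ∑' k : ℤ, (k : ℝ) ^ 2 * ‖d k‖ ^ 2| ≤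
      2 * B * v + v ^ 2 := by
    have h := weighted_diff (w := fun k : ℤ => (k : ℝ) ^ 2) (W := fun k : ℤ => (k : ℝ) ^ 2)
      (fun k => (abs_of_nonneg (sq_nonneg _)).le) (c := c) (d := d) hc hd
    rw [← hB, ← hv, ← hvsq] at h
    exact h
  -- estimate for S1
  have hcW : Summable fun k : ℤ => (1 + (k : ℝ) ^ 2) * ‖c k‖ ^ 2 :=
    (hc2.add hc).congr fun k => by ring
  have hdW : Summable fun k : ℤ => (1 + (k : ℝ) ^ 2) * ‖d k‖ ^ 2 :=
    (hd2.add hd).congr fun k => by ring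
  have split_c : (∑' k : ℤ, (1 + (k : ℝ) ^ 2) * ‖c k‖ ^ 2)
      = (∑' k : ℤ, ‖c k‖ ^ 2) + ∑' k : ℤ, (k : ℝ) ^ 2 * ‖c k‖ ^ 2 := by
    rw [tsum_congr (fun k : ℤ => by ring :
      ∀ k : ℤ, (1 + (k : ℝ) ^ 2) * ‖c k‖ ^ 2 = ‖c k‖ ^ 2 + (k : ℝ) ^ 2 * ‖c k‖ ^ 2)]
    exact Summable.tsum_add hc2 hc
  have split_e : (∑' k : ℤ, (1 + (k : ℝ) ^ 2) * ‖c k - d k‖ ^ 2)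
      = (∑' k : ℤ, ‖c k - d k‖ ^ 2) + ∑' k : ℤ, (k : ℝ) ^ 2 * ‖c k - d k‖ ^ 2 := by
    rw [tsum_congr (fun k : ℤ => by ring :
      ∀ k : ℤ, (1 + (k : ℝ) ^ 2) * ‖c k - d k‖ ^ 2
        = ‖c k - d k‖ ^ 2 + (k : ℝ) ^ 2 * ‖c k - d k‖ ^ 2)]
    exact Summable.tsum_add he2 hek
  have E1 : |(∑' k : ℤ, (k : ℝ) * ‖c k‖ ^ 2) - ∑' k : ℤ, (k : ℝ) * ‖d k‖ ^ 2| ≤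
      2 * Real.sqrt ((∑' k : ℤ, ‖c k‖ ^ 2) + ∑' k : ℤ, (k : ℝ) ^ 2 * ‖c k‖ ^ 2) *
        Real.sqrt (u ^ 2 + v ^ 2) + (u ^ 2 + v ^ 2) := by
    have h := weighted_diff (w := fun k : ℤ => (k : ℝ)) (W := fun k : ℤ => 1 + (k : ℝ) ^ 2)
      (fun k => by
        show |(k : ℝ)| ≤ 1 + (k : ℝ) ^ 2
        nlinarith [sq_abs ((k : ℝ)), abs_nonneg ((k : ℝ)),
          sq_nonneg (abs ((k : ℝ)) - 1)]) (c := c) (d := d) hcW hdW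
    rw [split_c, split_e, ← husq, ← hvsq] at h
    exact h
  have hsX : Real.sqrt ((∑' k : ℤ, ‖c k‖ ^ 2) + ∑' k : ℤ, (k : ℝ) ^ 2 * ‖c k‖ ^ 2) ≤ A + B := by
    have h := sqrt_add_le' (∑' k : ℤ, ‖c k‖ ^ 2) (∑' k : ℤ, (k : ℝ) ^ 2 * ‖c k‖ ^ 2) ha0.le ha2nn
    rwa [← hA, ← hB] at h
  have hsY : Real.sqrt (u ^ 2 + v ^ 2) ≤ u + v := by
    have h := sqrt_add_le' (u ^ 2) (v ^ 2) (sq_nonneg _) (sq_nonneg _)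
    rwa [Real.sqrt_sq hu0, Real.sqrt_sq hv0] at h
  -- estimate for trigSum
  have ET : ‖trigSum c - trigSum d‖ ≤ u * A + Real.sqrt (∑' k : ℤ, ‖d k‖ ^ 2) * u := by
    have h := trig_diff hc2 hd2
    rwa [← hA, ← hu] at h
  have hBd : Real.sqrt (∑' k : ℤ, ‖d k‖ ^ 2) ≤ A + u := by
    have h1 : (∑' k : ℤ, ‖d k‖ ^ 2) ≤ (A + u) ^ 2 := by
      nlinarith [neg_abs_le ((∑' k : ℤ, ‖c k‖ ^ 2) - ∑' k : ℤ, ‖d k‖ ^ 2), E0, hA2]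
    calc Real.sqrt (∑' k : ℤ, ‖d k‖ ^ 2) ≤ Real.sqrt ((A + u) ^ 2) := Real.sqrt_le_sqrt h1
      _ = A + u := Real.sqrt_sq (by linarith)
  -- assemble
  have hdist : dist ((∑' k : ℤ, ‖d k‖ ^ 2, ∑' k : ℤ, (k : ℝ) * ‖d k‖ ^ 2,
      ∑' k : ℤ, (k : ℝ) ^ 2 * ‖d k‖ ^ 2, trigSum d) : ℝ × ℝ × ℝ × ℂ) p < ε' := by
    rw [hp]
    simp only [Prod.dist_eq]
    refine max_lt ?_ (max_lt ?_ (max_lt ?_ ?_))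
    · rw [Real.dist_eq, abs_sub_comm]
      exact lt_of_le_of_lt E0 (num1 hA0 hB0 hu0 huδ hδpos hδ1 hδε')
    · rw [Real.dist_eq, abs_sub_comm]
      refine lt_of_le_of_lt E1 ?_
      have hXY : Real.sqrt ((∑' k : ℤ, ‖c k‖ ^ 2) + ∑' k : ℤ, (k : ℝ) ^ 2 * ‖c k‖ ^ 2) *
          Real.sqrt (u ^ 2 + v ^ 2) ≤ (A + B) * (u + v) :=
        mul_le_mul hsX hsY (Real.sqrt_nonneg _) (by linarith)
      have hn := num2 hA0 hB0 hu0 hv0 huδ hvδ hδpos hδ1 hδε'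
      linarith [hXY, hn]
    · rw [Real.dist_eq, abs_sub_comm]
      have hδε'' : δ * (4 * (B + A + 1) + 1) ≤ ε' := by linarith
      exact lt_of_le_of_lt E2 (num1 hB0 hA0 hv0 hvδ hδpos hδ1 hδε'')
    · rw [dist_eq_norm]
      have hTT : ‖trigSum d - trigSum c‖ = ‖trigSum c - trigSum d‖ := norm_sub_rev _ _
      rw [hTT]
      have h2 : ‖trigSum c - trigSum d‖ ≤ u * A + (A + u) * u :=
        ET.trans (by nlinarith [mul_le_mul_of_nonneg_right hBd hu0])
      have hn := num1 hA0 hB0 hu0 huδ hδpos hδ1 hδε'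
      linarith [h2, hn]
  have hfinal := hball hdist
  rw [UC_eq_G c, UC_eq_G d, ← hp, ← Real.dist_eq, dist_comm]
  exact hfinal
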